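/- arXiv:2011.03997 — 5 statements merged into one kernel-verified Lean document; each statement's English description precedes it below -/
import Mathlib

section
/- Let M be a proper pointwise semi-slant submanifold of an LCK-manifold M̃. Then for all X, Y ∈ Γ(𝔇) and Z ∈ Γ(𝔇^θ): sin²θ g(∇_X Y, Z) = g(A_{FZ} JY - A_{FPZ} Y, X) - g(JX, Y) g(α^#, FZ) - g(X, Y) g(β^#, FZ), where β(X) = -α(JX). -/
/-!
We model the geometry of a submanifold `M` of an almost Hermitian (locally
conformal Kaehler) manifold algebraically.  `M` is the set of points of the
submanifold, `R := M → ℝ` plays the role of the ring of functions on `M`,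
`V` is the module of tangent vector fields of `M`, `N` the module of normal
vector fields, and `W` the module of ambient vector fields along `M`, with
inclusions `iT`, `iN`.  `G` is the ambient metric, `J` the almost complex
structure, `P`/`F` the tangential/normal parts of `J` on tangent fields,
`nab` the induced Levi-Civita connection on `M`, `hh` the second fundamental
form, `A` the shape operator, `nabp` the normal connection, and `natl` the
ambient Levi-Civita connection differentiated along tangent directions
(Gauss and Weingarten formulas).  The LCK structure equation
`(∇̃_X J)Y = g(λ,JY)X - g(λ,Y)JX + g(JX,Y)λ + g(X,Y)Jλ` is imposed with Lee
vector field `lee = λ = α^#`; note `β^# = Jλ`, `α(X) = g(λ,X)`.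
`M` is pointwise semi-slant: `TM = 𝔇 ⊕ 𝔇^θ` (`DD`, `DTh`) with `J𝔇 = 𝔇` and
`𝔇^θ` pointwise slant with slant function `θ` (`P² = -(cos²θ)Id` on `𝔇^θ`).
-/

/-- Lemma 3.1: `sin²θ g(∇_X Y, Z) = g(A_{FZ}JY - A_{FPZ}Y, X) - g(JX,Y)g(α^#,FZ) - g(X,Y)g(β^#,FZ)`, where `β^# = Jλ` and `JY = PY` for `Y ∈ 𝔇`. -/
theorem lemma31
    {M V N W : Type*}
    [AddCommGroup V] [Module (M → ℝ) V]
    [AddCommGroup N] [Module (M → ℝ) N]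
    [AddCommGroup W] [Module (M → ℝ) W]
    (iT : V →ₗ[M → ℝ] W) (iN : N →ₗ[M → ℝ] W)
    (G : W → W → M → ℝ)
    (Gsymm : ∀ a b, G a b = G b a)
    (Gaddl : ∀ a b c, G (a + b) c = G a c + G b c)
    (Gsmull : ∀ (r : M → ℝ) (a b : W), G (r • a) b = r * G a b)
    (Gorth : ∀ (X : V) (ξ : N), G (iT X) (iN ξ) = 0)
    (J : W →ₗ[M → ℝ] W)
    (hJ2 : ∀ a, J (J a) = -a)
    (hJG : ∀ a b, G (J a) (J b) = G a b)
    (P : V →ₗ[M → ℝ] V) (F : V →ₗ[M → ℝ] N)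
    (hJT : ∀ X : V, J (iT X) = iT (P X) + iN (F X))
    (nab : V → V → V) (hh : V → V → N) (A : N → V → V) (nabp : V → N → N)
    (natl : V → W → W)
    (hGauss : ∀ X Y : V, natl X (iT Y) = iT (nab X Y) + iN (hh X Y))
    (hWein : ∀ (X : V) (ξ : N), natl X (iN ξ) = -(iT (A ξ X)) + iN (nabp X ξ))
    (hhsymm : ∀ X Y, hh X Y = hh Y X)
    (hShape : ∀ (X Y : V) (ξ : N), G (iN (hh X Y)) (iN ξ) = G (iT (A ξ X)) (iT Y))
    (lee : W)
    (hLCK : ∀ (X : V) (a : W),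
      natl X (J a) - J (natl X a)
        = G lee (J a) • iT X - G lee a • J (iT X)
          + G (J (iT X)) a • lee + G (iT X) a • J lee)
    (DD DTh : Submodule (M → ℝ) V)
    (θ : M → ℝ)
    (hsplit : ∀ X : V, ∃ X₁ ∈ DD, ∃ X₂ ∈ DTh, X = X₁ + X₂)
    (horth : ∀ X ∈ DD, ∀ Z ∈ DTh, G (iT X) (iT Z) = 0)
    (hinv : ∀ X ∈ DD, P X ∈ DD ∧ F X = 0)
    (hPDTh : ∀ Z ∈ DTh, P Z ∈ DTh)
    (hslant : ∀ Z ∈ DTh, P (P Z) = -((fun x => Real.cos (θ x) ^ 2) • Z))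
    (hproper : ∀ x, 0 < Real.cos (θ x) ^ 2 ∧ Real.cos (θ x) ^ 2 < 1)
    (hDDne : DD ≠ ⊥) :
    ∀ X ∈ DD, ∀ Y ∈ DD, ∀ Z ∈ DTh,
      (fun x => Real.sin (θ x) ^ 2) * G (iT (nab X Y)) (iT Z)
        = G (iT (A (F Z) (P Y) - A (F (P Z)) Y)) (iT X)
          - G (J (iT X)) (iT Y) * G lee (iN (F Z))
          - G (iT X) (iT Y) * G (J lee) (iN (F Z)) := by

  intro X hX Y hY Z hZ
  -- bilinearity helpers
  have Gsmulr : ∀ (r : M → ℝ) (a b : W), G a (r • b) = r * G a b := fun r a b => by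
    rw [Gsymm, Gsmull, Gsymm]
  have Gaddr : ∀ a b c : W, G a (b + c) = G a b + G a c := fun a b c => by
    rw [Gsymm, Gaddl, Gsymm b a, Gsymm c a]
  have Gnegl : ∀ a b : W, G (-a) b = -G a b := fun a b => by
    have h := Gsmull (-1) a b
    rw [neg_one_smul] at h
    rw [h, neg_one_mul]
  have Gnegr : ∀ a b : W, G a (-b) = -G a b := fun a b => by
    rw [Gsymm, Gnegl, Gsymm]
  have Gsubl : ∀ a b c : W, G (a - b) c = G a c - G b c := fun a b c => by
    rw [sub_eq_add_neg, Gaddl, Gnegl, ← sub_eq_add_neg]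
  -- basic facts about X, Y, Z
  have hFY : F Y = 0 := (hinv Y hY).2
  have hFX : F X = 0 := (hinv X hX).2
  have hJy : J (iT Y) = iT (P Y) := by rw [hJT, hFY, map_zero, add_zero]
  have hJx : J (iT X) = iT (P X) := by rw [hJT, hFX, map_zero, add_zero]
  -- the LCK defect term
  obtain ⟨D, hD1, hD2⟩ :
      ∃ D : W,
        J (natl X (iT Y)) = natl X (iT (P Y)) - D ∧
        G D (iN (F Z)) = G (J (iT X)) (iT Y) * G lee (iN (F Z))
          + G (iT X) (iT Y) * G (J lee) (iN (F Z)) := by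
    refine ⟨G lee (J (iT Y)) • iT X - G lee (iT Y) • J (iT X)
        + G (J (iT X)) (iT Y) • lee + G (iT X) (iT Y) • J lee, ?_, ?_⟩
    · have h := hLCK X (iT Y)
      rw [← hJy]
      rw [← h]
      abel
    · have hxν : G (iT X) (iN (F Z)) = 0 := Gorth X (F Z)
      have hJxν : G (J (iT X)) (iN (F Z)) = 0 := by
        rw [hJx]; exact Gorth (P X) (F Z)
      rw [Gaddl, Gaddl, Gsubl, Gsmull, Gsmull, Gsmull, Gsmull, hxν, hJxν,
        mul_zero, mul_zero]
      ring
  -- shape-operator identities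
  have hA1 : G (natl X (iT (P Y))) (iN (F Z)) = G (iT (A (F Z) (P Y))) (iT X) := by
    rw [hGauss, Gaddl, Gorth, zero_add, hhsymm, hShape]
  have hA2 : G (natl X (iT Y)) (iN (F (P Z))) = G (iT (A (F (P Z)) Y)) (iT X) := by
    rw [hGauss, Gaddl, Gorth, zero_add, hhsymm, hShape]
  -- Gauss formula reduction
  have E1 : G (natl X (iT Y)) (iT Z) = G (iT (nab X Y)) (iT Z) := by
    rw [hGauss, Gaddl, Gsymm (iN (hh X Y)), Gorth, add_zero]
  -- first application of the J-trick
  have E2 : G (natl X (iT Y)) (iT Z)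
      = G (natl X (iT (P Y))) (iT (P Z)) + G (iT (A (F Z) (P Y))) (iT X)
        - G D (iT (P Z)) - G D (iN (F Z)) := by
    conv_lhs => rw [← hJG]
    rw [hD1, Gsubl, hJT Z, Gaddr, Gaddr, hA1]
    ring
  -- second application of the J-trick, using the slant condition
  have hD1' : natl X (iT (P Y)) = J (natl X (iT Y)) + D := by
    rw [hD1]; abel
  have hJb : J (natl X (iT (P Y))) = J D - natl X (iT Y) := by
    rw [hD1', map_add, hJ2]
    abel
  have hJPz : J (iT (P Z))
      = -((fun x => Real.cos (θ x) ^ 2) • iT Z) + iN (F (P Z)) := by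
    rw [hJT, hslant Z hZ, map_neg, map_smul]
  have E4 : G (natl X (iT (P Y))) (iT (P Z))
      = G D (iT (P Z))
        + (fun x => Real.cos (θ x) ^ 2) * G (natl X (iT Y)) (iT Z)
        - G (iT (A (F (P Z)) Y)) (iT X) := by
    conv_lhs => rw [← hJG]
    rw [hJb, Gsubl, hJG, hJPz, Gaddr, Gnegr, Gsmulr, hA2]
    ring
  -- assembling everything
  have E6 : G (iT (A (F Z) (P Y) - A (F (P Z)) Y)) (iT X)
      = G (iT (A (F Z) (P Y))) (iT X) - G (iT (A (F (P Z)) Y)) (iT X) := by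
    rw [map_sub, Gsubl]
  have hs : (fun x => Real.sin (θ x) ^ 2)
      = (1 : M → ℝ) - (fun x => Real.cos (θ x) ^ 2) := by
    funext p
    simp [Real.sin_sq, Pi.sub_apply]
  linear_combination (norm := ring_nf) E2 + E4 - hD2 - E6
    + G (iT (nab X Y)) (iT Z) * hs
    - ((1 : M → ℝ) - fun x => Real.cos (θ x) ^ 2) * E1
end

section
/- Let M = N^T ×_f N^θ be a pointwise semi-slant warped product in an LCK-manifold with Lee vector field λ tangent to M. Then g(h(X, Y), FZ) = 0 for all X, Y ∈ Γ(TN^T) and Z ∈ Γ(TN^θ). -/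
/-!
We model the geometry of a submanifold `M` of an almost Hermitian (locally
conformal Kaehler) manifold algebraically.  `M` is the set of points of the
submanifold, `R := M → ℝ` plays the role of the ring of functions on `M`,
`V` is the module of tangent vector fields of `M`, `N` the module of normal
vector fields, and `W` the module of ambient vector fields along `M`, with
inclusions `iT`, `iN`.  `G` is the ambient metric, `J` the almost complex
structure, `P`/`F` the tangential/normal parts of `J` on tangent fields,
`nab` the induced Levi-Civita connection on `M`, `hh` the second fundamental
form, `A` the shape operator, `nabp` the normal connection, and `natl` the
ambient Levi-Civita connection differentiated along tangent directions
(Gauss and Weingarten formulas).  The LCK structure equation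
`(∇̃_X J)Y = g(λ,JY)X - g(λ,Y)JX + g(JX,Y)λ + g(X,Y)Jλ` is imposed with Lee
vector field `lee = λ = α^#`; note `β^# = Jλ`, `α(X) = g(λ,X)`.
`M` is pointwise semi-slant: `TM = 𝔇 ⊕ 𝔇^θ` (`DD`, `DTh`) with `J𝔇 = 𝔇` and
`𝔇^θ` pointwise slant with slant function `θ` (`P² = -(cos²θ)Id` on `𝔇^θ`).
-/

/-- Lemma 4.2(i): `g(h(X,Y), FZ) = 0` for a pointwise semi-slant warped product with tangent Lee vector field. -/
theorem lemma42i
    {M V N W : Type*}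
    [AddCommGroup V] [Module (M → ℝ) V]
    [AddCommGroup N] [Module (M → ℝ) N]
    [AddCommGroup W] [Module (M → ℝ) W]
    (iT : V →ₗ[M → ℝ] W) (iN : N →ₗ[M → ℝ] W)
    (G : W → W → M → ℝ)
    (Gsymm : ∀ a b, G a b = G b a)
    (Gaddl : ∀ a b c, G (a + b) c = G a c + G b c)
    (Gsmull : ∀ (r : M → ℝ) (a b : W), G (r • a) b = r * G a b)
    (Gorth : ∀ (X : V) (ξ : N), G (iT X) (iN ξ) = 0)
    (J : W →ₗ[M → ℝ] W)
    (hJ2 : ∀ a, J (J a) = -a)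
    (hJG : ∀ a b, G (J a) (J b) = G a b)
    (P : V →ₗ[M → ℝ] V) (F : V →ₗ[M → ℝ] N)
    (hJT : ∀ X : V, J (iT X) = iT (P X) + iN (F X))
    (nab : V → V → V) (hh : V → V → N) (A : N → V → V) (nabp : V → N → N)
    (natl : V → W → W)
    (hGauss : ∀ X Y : V, natl X (iT Y) = iT (nab X Y) + iN (hh X Y))
    (hWein : ∀ (X : V) (ξ : N), natl X (iN ξ) = -(iT (A ξ X)) + iN (nabp X ξ))
    (hhsymm : ∀ X Y, hh X Y = hh Y X)
    (hShape : ∀ (X Y : V) (ξ : N), G (iN (hh X Y)) (iN ξ) = G (iT (A ξ X)) (iT Y))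
    (lee : W)
    (hLCK : ∀ (X : V) (a : W),
      natl X (J a) - J (natl X a)
        = G lee (J a) • iT X - G lee a • J (iT X)
          + G (J (iT X)) a • lee + G (iT X) a • J lee)
    (DD DTh : Submodule (M → ℝ) V)
    (θ : M → ℝ)
    (hsplit : ∀ X : V, ∃ X₁ ∈ DD, ∃ X₂ ∈ DTh, X = X₁ + X₂)
    (horth : ∀ X ∈ DD, ∀ Z ∈ DTh, G (iT X) (iT Z) = 0)
    (hinv : ∀ X ∈ DD, P X ∈ DD ∧ F X = 0)
    (hPDTh : ∀ Z ∈ DTh, P Z ∈ DTh)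
    (hslant : ∀ Z ∈ DTh, P (P Z) = -((fun x => Real.cos (θ x) ^ 2) • Z))
    (hproper : ∀ x, 0 < Real.cos (θ x) ^ 2 ∧ Real.cos (θ x) ^ 2 < 1)
    (hDDne : DD ≠ ⊥)
    (Dact : V → (M → ℝ) → M → ℝ)
    (lnf : M → ℝ)
    (hDadd : ∀ X r s, Dact X (r + s) = Dact X r + Dact X s)
    (hDmul : ∀ X r s, Dact X (r * s) = Dact X r * s + r * Dact X s)
    (hDcompat : ∀ (X : V) (a b : W), Dact X (G a b) = G (natl X a) b + G a (natl X b))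
    (hNTgeo : ∀ X ∈ DD, ∀ Y ∈ DD, nab X Y ∈ DD)
    (hXZ : ∀ X ∈ DD, ∀ Z ∈ DTh, nab X Z = Dact X lnf • Z ∧ nab Z X = Dact X lnf • Z)
    (hZW : ∀ X ∈ DD, ∀ Z ∈ DTh, ∀ Wv ∈ DTh,
      G (iT (nab Z Wv)) (iT X) = -(Dact X lnf) * G (iT Z) (iT Wv))
    (hfNT : ∀ Z ∈ DTh, Dact Z lnf = 0)
    (lv : V) (hleetan : lee = iT lv) :
    ∀ X ∈ DD, ∀ Y ∈ DD, ∀ Z ∈ DTh, G (iN (hh X Y)) (iN (F Z)) = 0 := by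
  -- basic bilinearity consequences for G
  have gzerol : ∀ b : W, G 0 b = 0 := by
    intro b
    have h := Gaddl 0 0 b
    rw [add_zero] at h
    linear_combination -h
  have gnegl : ∀ a b : W, G (-a) b = -(G a b) := by
    intro a b
    have h := Gaddl a (-a) b
    rw [add_neg_cancel, gzerol] at h
    linear_combination -h
  have gsubl : ∀ a b c : W, G (a - b) c = G a c - G b c := by
    intro a b c
    rw [sub_eq_add_neg, Gaddl, gnegl, ← sub_eq_add_neg]
  have gaddr : ∀ a b c : W, G a (b + c) = G a b + G a c := by
    intro a b c
    rw [Gsymm a (b + c), Gaddl, Gsymm b a, Gsymm c a]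
  have gnegr : ∀ a b : W, G a (-b) = -(G a b) := by
    intro a b
    rw [Gsymm a (-b), gnegl, Gsymm b a]
  have gsubr : ∀ a b c : W, G a (b - c) = G a b - G a c := by
    intro a b c
    rw [Gsymm a (b - c), gsubl, Gsymm b a, Gsymm c a]
  have gsmulr : ∀ (r : M → ℝ) (a b : W), G a (r • b) = r * G a b := by
    intro r a b
    rw [Gsymm a (r • b), Gsmull, Gsymm b a]
  have gJ : ∀ a b : W, G (J a) b = -(G a (J b)) := by
    intro a b
    have h := hJG a (J b)
    rw [hJ2, gnegr] at h
    linear_combination -h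
  have gJ2 : ∀ a b : W, G a (J b) = -(G (J a) b) := by
    intro a b
    rw [gJ a b, neg_neg]
  have gorth' : ∀ (ξ : N) (X : V), G (iN ξ) (iT X) = 0 := by
    intro ξ X
    rw [Gsymm]
    exact Gorth X ξ
  have hleeN : ∀ ξ : N, G lee (iN ξ) = 0 := by
    intro ξ
    rw [hleetan]
    exact Gorth lv ξ
  -- J restricted to DD is tangential
  have hJTD : ∀ X' ∈ DD, J (iT X') = iT (P X') := by
    intro X' hX'
    rw [hJT, (hinv X' hX').2, map_zero, add_zero]
  have hPP : ∀ X' ∈ DD, ∀ Y' ∈ DD, G (iT (P X')) (iT (P Y')) = G (iT X') (iT Y') := by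
    intro X' hX' Y' hY'
    rw [← hJTD X' hX', ← hJTD Y' hY', hJG]
  have hanti : ∀ X' ∈ DD, ∀ Y' ∈ DD,
      G (iT (P X')) (iT Y') = -(G (iT X') (iT (P Y'))) := by
    intro X' hX' Y' hY'
    rw [← hJTD X' hX', ← hJTD Y' hY']
    exact gJ _ _
  -- expression for J (iN (F Z')) on DTh
  have eJF : ∀ Z' ∈ DTh,
      J (iN (F Z')) = -(iT Z') + (fun x => Real.cos (θ x) ^ 2) • iT Z' - iN (F (P Z')) := by
    intro Z' hZ'
    have h1 : iN (F Z') = J (iT Z') - iT (P Z') := by rw [hJT]; abel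
    rw [h1, map_sub, hJ2, hJT (P Z'), hslant Z' hZ', map_neg, map_smul]
    abel
  -- master identity M1
  have M1 : ∀ X' ∈ DD, ∀ Y' ∈ DD, ∀ Z' ∈ DTh,
      G (iN (hh X' Y')) (iN (F Z')) =
        G (iT (P X')) (iT Y') * G lee (iT Z') +
          G (iT X') (iT Y') * G (J lee) (iT Z') := by
    intro X' hX' Y' hY' Z' hZ'
    have hJX' := hJTD X' hX'
    have hJY' := hJTD Y' hY'
    have e1 : G (natl X' (iT Y')) (J (iT Z')) = G (iN (hh X' Y')) (iN (F Z')) := by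
      rw [hGauss, hJT Z', Gaddl, gaddr, gaddr,
        horth _ (hNTgeo X' hX' Y' hY') _ (hPDTh Z' hZ'), Gorth, gorth']
      ring
    have e3 : J (natl X' (iT Y')) =
        natl X' (J (iT Y')) -
          (G lee (J (iT Y')) • iT X' - G lee (iT Y') • J (iT X')
            + G (J (iT X')) (iT Y') • lee + G (iT X') (iT Y') • J lee) := by
      rw [← hLCK X' (iT Y')]
      abel
    have e4 : G (natl X' (J (iT Y'))) (iT Z') = 0 := by
      rw [hJY', hGauss, Gaddl, horth _ (hNTgeo X' hX' _ (hinv Y' hY').1) _ hZ', gorth']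
      ring
    have e5 : G (G lee (J (iT Y')) • iT X' - G lee (iT Y') • J (iT X')
            + G (J (iT X')) (iT Y') • lee + G (iT X') (iT Y') • J lee) (iT Z')
        = G (iT (P X')) (iT Y') * G lee (iT Z') +
            G (iT X') (iT Y') * G (J lee) (iT Z') := by
      rw [Gaddl, Gaddl, gsubl, Gsmull, Gsmull, Gsmull, Gsmull, hJX',
        horth X' hX' Z' hZ', horth (P X') (hinv X' hX').1 Z' hZ']
      ring
    rw [← e1, gJ2, e3, gsubl, e4, e5]
    ring
  -- antisymmetric part kills the alpha-term
  have Malpha0 : ∀ X' ∈ DD, ∀ Y' ∈ DD, ∀ Z' ∈ DTh,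
      G (iT (P X')) (iT Y') * G lee (iT Z') = 0 := by
    intro X' hX' Y' hY' Z' hZ'
    have h1 := M1 X' hX' Y' hY' Z' hZ'
    have h2 := M1 Y' hY' X' hX' Z' hZ'
    rw [hhsymm Y' X'] at h2
    have ha2 : G (iT (P Y')) (iT X') = -(G (iT (P X')) (iT Y')) := by
      rw [hanti Y' hY' X' hX', Gsymm (iT Y') (iT (P X')), Gsymm (iT (P X')) (iT Y')]
    have hs : G (iT Y') (iT X') = G (iT X') (iT Y') := Gsymm _ _
    have key : G (iT (P X')) (iT Y') * G lee (iT Z') +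
        G (iT (P X')) (iT Y') * G lee (iT Z') = 0 := by
      linear_combination h2 - h1 + G lee (iT Z') * ha2 + G (J lee) (iT Z') * hs
    funext x
    have hx := congrFun key x
    simp only [Pi.add_apply, Pi.mul_apply, Pi.zero_apply] at hx ⊢
    linarith
  have Malpha : ∀ X' ∈ DD, ∀ Y' ∈ DD, ∀ Z' ∈ DTh,
      G (iT X') (iT Y') * G lee (iT Z') = 0 := by
    intro X' hX' Y' hY' Z' hZ'
    have h := Malpha0 X' hX' (P Y') (hinv Y' hY').1 Z' hZ'
    rw [Gsymm (iT (P X')) (iT (P Y')), hanti Y' hY' (P X') (hinv X' hX').1] at h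
    -- h : -(G (iT Y') (iT (P (P X')))) * α = 0 ; easier: redo via hPP
    have h' := Malpha0 X' hX' (P Y') (hinv Y' hY').1 Z' hZ'
    rw [hPP X' hX' Y' hY'] at h'
    exact h'
  have M1' : ∀ X' ∈ DD, ∀ Y' ∈ DD, ∀ Z' ∈ DTh,
      G (iN (hh X' Y')) (iN (F Z')) = G (iT X') (iT Y') * G (J lee) (iT Z') := by
    intro X' hX' Y' hY' Z' hZ'
    have h1 := M1 X' hX' Y' hY' Z' hZ'
    have h2 := Malpha0 X' hX' Y' hY' Z' hZ'
    linear_combination h1 + h2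
  -- normal pairing of the LCK equation kills the beta-term
  have Mbeta : ∀ X' ∈ DD, ∀ Y' ∈ DD, ∀ Z' ∈ DTh,
      G (iT (P X')) (iT Y') * G (J lee) (iT Z') = 0 := by
    intro X' hX' Y' hY' Z' hZ'
    have hJX' := hJTD X' hX'
    have hJY' := hJTD Y' hY'
    have hPZ' := hPDTh Z' hZ'
    have ebF : G (J lee) (iN (F Z')) =
        G lee (iT Z') - (fun x => Real.cos (θ x) ^ 2) * G lee (iT Z') := by
      rw [gJ, eJF Z' hZ', gsubr, gaddr, gnegr, gsmulr, hleeN]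
      ring
    have hb : G (J lee) (iT (P Z')) =
        (fun x => Real.cos (θ x) ^ 2) * G lee (iT Z') := by
      rw [gJ, hJT (P Z'), hslant Z' hZ', map_neg, map_smul, gaddr, gnegr, gsmulr, hleeN]
      ring
    have eA : G (natl X' (J (iT Y'))) (iN (F Z')) = G (iN (hh X' (P Y'))) (iN (F Z')) := by
      rw [hJY', hGauss, Gaddl, Gorth]
      ring
    have eB : G (J (natl X' (iT Y'))) (iN (F Z')) = G (iN (hh X' Y')) (iN (F (P Z'))) := by
      rw [gJ, eJF Z' hZ', hGauss, Gaddl, gsubr, gaddr, gnegr, gsmulr,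
        gsubr, gaddr, gnegr, gsmulr,
        horth _ (hNTgeo X' hX' Y' hY') _ hZ', Gorth, gorth']
      ring
    have eC : G (G lee (J (iT Y')) • iT X' - G lee (iT Y') • J (iT X')
            + G (J (iT X')) (iT Y') • lee + G (iT X') (iT Y') • J lee) (iN (F Z'))
        = G (iT X') (iT Y') *
            (G lee (iT Z') - (fun x => Real.cos (θ x) ^ 2) * G lee (iT Z')) := by
      rw [Gaddl, Gaddl, gsubl, Gsmull, Gsmull, Gsmull, Gsmull, hJX',
        Gorth, Gorth, hleeN, ebF]
      ring
    have h0 : G (natl X' (J (iT Y')) - J (natl X' (iT Y'))) (iN (F Z'))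
        = G (G lee (J (iT Y')) • iT X' - G lee (iT Y') • J (iT X')
            + G (J (iT X')) (iT Y') • lee + G (iT X') (iT Y') • J lee) (iN (F Z')) := by
      rw [hLCK X' (iT Y')]
    rw [gsubl, eA, eB, eC] at h0
    have hT1 := M1' X' hX' (P Y') (hinv Y' hY').1 Z' hZ'
    have hT2 := M1' X' hX' Y' hY' (P Z') hPZ'
    have hal := Malpha X' hX' Y' hY' Z' hZ'
    have ha := hanti X' hX' Y' hY'
    linear_combination hT1 - h0 - hT2 - G (iT X') (iT Y') * hb - hal +
      G (J lee) (iT Z') * ha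
  -- conclusion
  intro X hX Y hY Z hZ
  have h1 := M1' X hX Y hY Z hZ
  have h2 := Mbeta X hX (P Y) (hinv Y hY).1 Z hZ
  rw [hPP X hX Y hY] at h2
  rw [h1, h2]
end

section
/- Let M = N^T ×_f N^θ be a pointwise semi-slant warped product in an LCK-manifold with Lee vector field λ tangent to M. Then for all X ∈ Γ(TN^T) and Z, W ∈ Γ(TN^θ): g(h(X, Z), FW) = [g(λ, JX) - JX(ln f)] g(Z, W) + [g(λ, X) - X(ln f)] g(Z, PW). -/
/-!
We model the geometry of a submanifold `M` of an almost Hermitian (locally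
conformal Kaehler) manifold algebraically.  `M` is the set of points of the
submanifold, `R := M → ℝ` plays the role of the ring of functions on `M`,
`V` is the module of tangent vector fields of `M`, `N` the module of normal
vector fields, and `W` the module of ambient vector fields along `M`, with
inclusions `iT`, `iN`.  `G` is the ambient metric, `J` the almost complex
structure, `P`/`F` the tangential/normal parts of `J` on tangent fields,
`nab` the induced Levi-Civita connection on `M`, `hh` the second fundamental
form, `A` the shape operator, `nabp` the normal connection, and `natl` the
ambient Levi-Civita connection differentiated along tangent directions
(Gauss and Weingarten formulas).  The LCK structure equation
`(∇̃_X J)Y = g(λ,JY)X - g(λ,Y)JX + g(JX,Y)λ + g(X,Y)Jλ` is imposed with Lee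
vector field `lee = λ = α^#`; note `β^# = Jλ`, `α(X) = g(λ,X)`.
`M` is pointwise semi-slant: `TM = 𝔇 ⊕ 𝔇^θ` (`DD`, `DTh`) with `J𝔇 = 𝔇` and
`𝔇^θ` pointwise slant with slant function `θ` (`P² = -(cos²θ)Id` on `𝔇^θ`).
-/

/-- Lemma 4.2(ii): `g(h(X,Z), FW) = [g(λ,JX) - JX(ln f)]g(Z,W) + [g(λ,X) - X(ln f)]g(Z,PW)`; note `JX = PX` for `X ∈ 𝔇`. -/
theorem lemma42ii
    {M V N W : Type*}
    [AddCommGroup V] [Module (M → ℝ) V]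
    [AddCommGroup N] [Module (M → ℝ) N]
    [AddCommGroup W] [Module (M → ℝ) W]
    (iT : V →ₗ[M → ℝ] W) (iN : N →ₗ[M → ℝ] W)
    (G : W → W → M → ℝ)
    (Gsymm : ∀ a b, G a b = G b a)
    (Gaddl : ∀ a b c, G (a + b) c = G a c + G b c)
    (Gsmull : ∀ (r : M → ℝ) (a b : W), G (r • a) b = r * G a b)
    (Gorth : ∀ (X : V) (ξ : N), G (iT X) (iN ξ) = 0)
    (J : W →ₗ[M → ℝ] W)
    (hJ2 : ∀ a, J (J a) = -a)
    (hJG : ∀ a b, G (J a) (J b) = G a b)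
    (P : V →ₗ[M → ℝ] V) (F : V →ₗ[M → ℝ] N)
    (hJT : ∀ X : V, J (iT X) = iT (P X) + iN (F X))
    (nab : V → V → V) (hh : V → V → N) (A : N → V → V) (nabp : V → N → N)
    (natl : V → W → W)
    (hGauss : ∀ X Y : V, natl X (iT Y) = iT (nab X Y) + iN (hh X Y))
    (hWein : ∀ (X : V) (ξ : N), natl X (iN ξ) = -(iT (A ξ X)) + iN (nabp X ξ))
    (hhsymm : ∀ X Y, hh X Y = hh Y X)
    (hShape : ∀ (X Y : V) (ξ : N), G (iN (hh X Y)) (iN ξ) = G (iT (A ξ X)) (iT Y))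
    (lee : W)
    (hLCK : ∀ (X : V) (a : W),
      natl X (J a) - J (natl X a)
        = G lee (J a) • iT X - G lee a • J (iT X)
          + G (J (iT X)) a • lee + G (iT X) a • J lee)
    (DD DTh : Submodule (M → ℝ) V)
    (θ : M → ℝ)
    (hsplit : ∀ X : V, ∃ X₁ ∈ DD, ∃ X₂ ∈ DTh, X = X₁ + X₂)
    (horth : ∀ X ∈ DD, ∀ Z ∈ DTh, G (iT X) (iT Z) = 0)
    (hinv : ∀ X ∈ DD, P X ∈ DD ∧ F X = 0)
    (hPDTh : ∀ Z ∈ DTh, P Z ∈ DTh)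
    (hslant : ∀ Z ∈ DTh, P (P Z) = -((fun x => Real.cos (θ x) ^ 2) • Z))
    (hproper : ∀ x, 0 < Real.cos (θ x) ^ 2 ∧ Real.cos (θ x) ^ 2 < 1)
    (hDDne : DD ≠ ⊥)
    (Dact : V → (M → ℝ) → M → ℝ)
    (lnf : M → ℝ)
    (hDadd : ∀ X r s, Dact X (r + s) = Dact X r + Dact X s)
    (hDmul : ∀ X r s, Dact X (r * s) = Dact X r * s + r * Dact X s)
    (hDcompat : ∀ (X : V) (a b : W), Dact X (G a b) = G (natl X a) b + G a (natl X b))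
    (hNTgeo : ∀ X ∈ DD, ∀ Y ∈ DD, nab X Y ∈ DD)
    (hXZ : ∀ X ∈ DD, ∀ Z ∈ DTh, nab X Z = Dact X lnf • Z ∧ nab Z X = Dact X lnf • Z)
    (hZW : ∀ X ∈ DD, ∀ Z ∈ DTh, ∀ Wv ∈ DTh,
      G (iT (nab Z Wv)) (iT X) = -(Dact X lnf) * G (iT Z) (iT Wv))
    (hfNT : ∀ Z ∈ DTh, Dact Z lnf = 0)
    (lv : V) (hleetan : lee = iT lv) :
    ∀ X ∈ DD, ∀ Z ∈ DTh, ∀ Wv ∈ DTh,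
      G (iN (hh X Z)) (iN (F Wv))
        = (G lee (J (iT X)) - Dact (P X) lnf) * G (iT Z) (iT Wv)
          + (G lee (iT X) - Dact X lnf) * G (iT Z) (iT (P Wv)) := by

  intro X hX Z hZ Wv hW
  -- derived metric lemmas
  have Gaddr : ∀ a b c, G a (b + c) = G a b + G a c := fun a b c => by
    rw [Gsymm, Gaddl, Gsymm b a, Gsymm c a]
  have Gsmulr : ∀ (r : M → ℝ) (a b : W), G a (r • b) = r * G a b := fun r a b => by
    rw [Gsymm, Gsmull, Gsymm b a]
  have Gnegl : ∀ a b, G (-a) b = -(G a b) := fun a b => by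
    rw [show (-a : W) = (-1 : M → ℝ) • a from (neg_one_smul _ a).symm, Gsmull]
    ring
  have Gnegr : ∀ a b, G a (-b) = -(G a b) := fun a b => by
    rw [Gsymm, Gnegl, Gsymm b a]
  have Gsubl : ∀ a b c, G (a - b) c = G a c - G b c := fun a b c => by
    rw [sub_eq_add_neg, Gaddl, Gnegl]; ring
  have Gsubr : ∀ a b c, G a (b - c) = G a b - G a c := fun a b c => by
    rw [Gsymm, Gsubl, Gsymm b a, Gsymm c a]
  have GJanti : ∀ a b, G a (J b) = -(G (J a) b) := fun a b => by
    rw [← hJG a (J b), hJ2 b, Gnegr]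
  have hPX : P X ∈ DD := (hinv X hX).1
  have hFX : F X = 0 := (hinv X hX).2
  have hJX : J (iT X) = iT (P X) := by rw [hJT, hFX, map_zero, add_zero]
  have hZX : G (iT Z) (iT X) = 0 := by rw [Gsymm]; exact horth X hX Z hZ
  have hZPX : G (iT Z) (iT (P X)) = 0 := by rw [Gsymm]; exact horth (P X) hPX Z hZ
  have hZJW : G (iT Z) (J (iT Wv)) = G (iT Z) (iT (P Wv)) := by
    rw [hJT, Gaddr, Gorth Z (F Wv), add_zero]
  have hJZW : G (J (iT Z)) (iT Wv) = -(G (iT Z) (iT (P Wv))) := by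
    rw [Gsymm, GJanti, Gsymm (J (iT Wv)), hZJW]
  have hJZX : G (J (iT Z)) (iT X) = 0 := by
    rw [Gsymm, GJanti, Gsymm (J (iT X)), hJX, hZPX, neg_zero]
  -- Gauss + warped product along Z X
  have key1 : iN (hh X Z) = natl Z (iT X) - Dact X lnf • iT Z := by
    have h1 := hGauss Z X
    rw [(hXZ X hX Z hZ).2, hhsymm Z X, map_smul] at h1
    rw [h1]; abel
  -- normal part of ambient derivative of J iT X paired with iT Wv
  have hnatlJX : G (natl Z (J (iT X))) (iT Wv) = Dact (P X) lnf * G (iT Z) (iT Wv) := by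
    rw [hJX, hGauss, (hXZ (P X) hPX Z hZ).2, map_smul, Gaddl, Gsmull,
      Gsymm (iN (hh Z (P X))), Gorth, add_zero]
  -- LCK identity, scalar form
  have hLCKs : G (J (natl Z (iT X))) (iT Wv)
      = G (natl Z (J (iT X))) (iT Wv)
        - (G lee (J (iT X)) * G (iT Z) (iT Wv)
           + G lee (iT X) * G (iT Z) (iT (P Wv))) := by
    have h2 : J (natl Z (iT X))
        = natl Z (J (iT X))
          - (G lee (J (iT X)) • iT Z - G lee (iT X) • J (iT Z)
             + G (J (iT Z)) (iT X) • lee + G (iT Z) (iT X) • J lee) := by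
      rw [← hLCK Z (iT X)]; abel
    rw [h2, Gsubl, Gaddl, Gaddl, Gsubl, Gsmull, Gsmull, Gsmull, Gsmull,
      hJZW, hJZX, hZX, zero_mul, zero_mul, add_zero, add_zero]
    ring
  have hFW : iN (F Wv) = J (iT Wv) - iT (P Wv) := by rw [hJT]; abel
  have horthhh : G (iN (hh X Z)) (iT (P Wv)) = 0 := by
    rw [Gsymm]; exact Gorth (P Wv) (hh X Z)
  calc G (iN (hh X Z)) (iN (F Wv))
      = G (iN (hh X Z)) (J (iT Wv)) - G (iN (hh X Z)) (iT (P Wv)) := by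
        rw [hFW, Gsubr]
    _ = G (natl Z (iT X)) (J (iT Wv)) - Dact X lnf * G (iT Z) (iT (P Wv)) := by
        rw [horthhh, sub_zero, key1, Gsubl, Gsmull, hZJW]
    _ = -(G (J (natl Z (iT X))) (iT Wv)) - Dact X lnf * G (iT Z) (iT (P Wv)) := by
        rw [GJanti]
    _ = (G lee (J (iT X)) - Dact (P X) lnf) * G (iT Z) (iT Wv)
          + (G lee (iT X) - Dact X lnf) * G (iT Z) (iT (P Wv)) := by
        rw [hLCKs, hnatlJX]; ring
end

section
/- Let M = N^T ×_f N^θ be a nontrivial pointwise semi-slant warped product in an LCK-manifold with Lee field tangent to M. Then g(h(X, PZ), FW) = -g(h(X, Z), FPW) for all X ∈ Γ(TN^T) and Z, W ∈ Γ(TN^θ). -/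
/-!
We model the geometry of a submanifold `M` of an almost Hermitian (locally
conformal Kaehler) manifold algebraically.  `M` is the set of points of the
submanifold, `R := M → ℝ` plays the role of the ring of functions on `M`,
`V` is the module of tangent vector fields of `M`, `N` the module of normal
vector fields, and `W` the module of ambient vector fields along `M`, with
inclusions `iT`, `iN`.  `G` is the ambient metric, `J` the almost complex
structure, `P`/`F` the tangential/normal parts of `J` on tangent fields,
`nab` the induced Levi-Civita connection on `M`, `hh` the second fundamental
form, `A` the shape operator, `nabp` the normal connection, and `natl` the
ambient Levi-Civita connection differentiated along tangent directions
(Gauss and Weingarten formulas).  The LCK structure equation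
`(∇̃_X J)Y = g(λ,JY)X - g(λ,Y)JX + g(JX,Y)λ + g(X,Y)Jλ` is imposed with Lee
vector field `lee = λ = α^#`; note `β^# = Jλ`, `α(X) = g(λ,X)`.
`M` is pointwise semi-slant: `TM = 𝔇 ⊕ 𝔇^θ` (`DD`, `DTh`) with `J𝔇 = 𝔇` and
`𝔇^θ` pointwise slant with slant function `θ` (`P² = -(cos²θ)Id` on `𝔇^θ`).
-/

/-- Corollary 4.1: `g(h(X,PZ), FW) = -g(h(X,Z), FPW)` for a nontrivial pointwise semi-slant warped product with tangent Lee field. -/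
theorem corollary41
    {M V N W : Type*}
    [AddCommGroup V] [Module (M → ℝ) V]
    [AddCommGroup N] [Module (M → ℝ) N]
    [AddCommGroup W] [Module (M → ℝ) W]
    (iT : V →ₗ[M → ℝ] W) (iN : N →ₗ[M → ℝ] W)
    (G : W → W → M → ℝ)
    (Gsymm : ∀ a b, G a b = G b a)
    (Gaddl : ∀ a b c, G (a + b) c = G a c + G b c)
    (Gsmull : ∀ (r : M → ℝ) (a b : W), G (r • a) b = r * G a b)
    (Gorth : ∀ (X : V) (ξ : N), G (iT X) (iN ξ) = 0)
    (J : W →ₗ[M → ℝ] W)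
    (hJ2 : ∀ a, J (J a) = -a)
    (hJG : ∀ a b, G (J a) (J b) = G a b)
    (P : V →ₗ[M → ℝ] V) (F : V →ₗ[M → ℝ] N)
    (hJT : ∀ X : V, J (iT X) = iT (P X) + iN (F X))
    (nab : V → V → V) (hh : V → V → N) (A : N → V → V) (nabp : V → N → N)
    (natl : V → W → W)
    (hGauss : ∀ X Y : V, natl X (iT Y) = iT (nab X Y) + iN (hh X Y))
    (hWein : ∀ (X : V) (ξ : N), natl X (iN ξ) = -(iT (A ξ X)) + iN (nabp X ξ))
    (hhsymm : ∀ X Y, hh X Y = hh Y X)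
    (hShape : ∀ (X Y : V) (ξ : N), G (iN (hh X Y)) (iN ξ) = G (iT (A ξ X)) (iT Y))
    (lee : W)
    (hLCK : ∀ (X : V) (a : W),
      natl X (J a) - J (natl X a)
        = G lee (J a) • iT X - G lee a • J (iT X)
          + G (J (iT X)) a • lee + G (iT X) a • J lee)
    (DD DTh : Submodule (M → ℝ) V)
    (θ : M → ℝ)
    (hsplit : ∀ X : V, ∃ X₁ ∈ DD, ∃ X₂ ∈ DTh, X = X₁ + X₂)
    (horth : ∀ X ∈ DD, ∀ Z ∈ DTh, G (iT X) (iT Z) = 0)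
    (hinv : ∀ X ∈ DD, P X ∈ DD ∧ F X = 0)
    (hPDTh : ∀ Z ∈ DTh, P Z ∈ DTh)
    (hslant : ∀ Z ∈ DTh, P (P Z) = -((fun x => Real.cos (θ x) ^ 2) • Z))
    (hproper : ∀ x, 0 < Real.cos (θ x) ^ 2 ∧ Real.cos (θ x) ^ 2 < 1)
    (hDDne : DD ≠ ⊥)
    (Dact : V → (M → ℝ) → M → ℝ)
    (lnf : M → ℝ)
    (hDadd : ∀ X r s, Dact X (r + s) = Dact X r + Dact X s)
    (hDmul : ∀ X r s, Dact X (r * s) = Dact X r * s + r * Dact X s)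
    (hDcompat : ∀ (X : V) (a b : W), Dact X (G a b) = G (natl X a) b + G a (natl X b))
    (hNTgeo : ∀ X ∈ DD, ∀ Y ∈ DD, nab X Y ∈ DD)
    (hXZ : ∀ X ∈ DD, ∀ Z ∈ DTh, nab X Z = Dact X lnf • Z ∧ nab Z X = Dact X lnf • Z)
    (hZW : ∀ X ∈ DD, ∀ Z ∈ DTh, ∀ Wv ∈ DTh,
      G (iT (nab Z Wv)) (iT X) = -(Dact X lnf) * G (iT Z) (iT Wv))
    (hfNT : ∀ Z ∈ DTh, Dact Z lnf = 0)
    (lv : V) (hleetan : lee = iT lv)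
    (hnontrivial : ∃ X ∈ DD, Dact X lnf ≠ 0) :
    ∀ X ∈ DD, ∀ Z ∈ DTh, ∀ Wv ∈ DTh,
      G (iN (hh X (P Z))) (iN (F Wv)) = -G (iN (hh X Z)) (iN (F (P Wv))) := by

  -- auxiliary metric identities
  have Gaddr : ∀ a b c, G a (b + c) = G a b + G a c := fun a b c => by
    rw [Gsymm, Gaddl, Gsymm b, Gsymm c]
  have Gsmulr : ∀ (r : M → ℝ) a b, G a (r • b) = r * G a b := fun r a b => by
    rw [Gsymm, Gsmull, Gsymm]
  have Gnegl : ∀ a b, G (-a) b = -(G a b) := fun a b => by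
    have h := Gsmull (-1) a b
    rw [neg_one_smul] at h
    rw [h]; ring
  have Gnegr : ∀ a b, G a (-b) = -(G a b) := fun a b => by
    rw [Gsymm, Gnegl, Gsymm]
  have Gsubl : ∀ a b c, G (a - b) c = G a c - G b c := fun a b c => by
    rw [sub_eq_add_neg, Gaddl, Gnegl]; ring
  have GNT : ∀ (ξ : N) (X : V), G (iN ξ) (iT X) = 0 := fun ξ X => by
    rw [Gsymm]; exact Gorth X ξ
  have GJswap : ∀ a b, G a (J b) = -(G (J a) b) := fun a b => by
    have h := hJG a (J b)
    rw [hJ2] at h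
    rw [← h, Gnegr]
  have GJT : ∀ a b : V, G (J (iT a)) (iT b) = -(G (iT a) (iT (P b))) := fun a b => by
    have h1 := GJswap (iT a) (iT b)
    rw [hJT b, Gaddr, Gorth, add_zero] at h1
    rw [h1]; ring
  have Pskew : ∀ a b : V, G (iT (P a)) (iT b) = -(G (iT a) (iT (P b))) := fun a b => by
    have h1 : iT (P a) = J (iT a) - iN (F a) := by rw [hJT]; abel
    rw [h1, Gsubl, GNT, sub_zero, GJT]
  have hJTX : ∀ X ∈ DD, J (iT X) = iT (P X) := by
    intro X hX
    rw [hJT, (hinv X hX).2, map_zero, add_zero]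
  -- key identity (Lemma 4.2)
  have keyE : ∀ X ∈ DD, ∀ Z ∈ DTh, ∀ Wv ∈ DTh,
      G (iN (hh X Z)) (iN (F Wv)) =
        (G lee (iT (P X)) - Dact (P X) lnf) * G (iT Z) (iT Wv)
        + (G lee (iT X) - Dact X lnf) * G (iT Z) (iT (P Wv)) := by
    intro X hX Z hZ Wv hW
    have hPX : P X ∈ DD := (hinv X hX).1
    have hPZ : P Z ∈ DTh := hPDTh Z hZ
    have Gz2 : G (iT Z) (iT X) = 0 := by rw [Gsymm]; exact horth X hX Z hZ
    have Gz1 : G (J (iT Z)) (iT X) = 0 := by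
      rw [hJT, Gaddl, GNT, add_zero, Gsymm]
      exact horth X hX (P Z) hPZ
    have h := hLCK Z (iT X)
    rw [hJTX X hX, Gz1, Gz2, zero_smul, zero_smul, add_zero, add_zero] at h
    have hJn : J (natl Z (iT X)) =
        natl Z (iT (P X)) - (G lee (iT (P X)) • iT Z - G lee (iT X) • J (iT Z)) := by
      rw [← h]; abel
    have NA : G (natl Z (iT (P X))) (iT Wv) = Dact (P X) lnf * G (iT Z) (iT Wv) := by
      rw [hGauss Z (P X), Gaddl, GNT, add_zero, (hXZ (P X) hPX Z hZ).2, map_smul, Gsmull]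
    have NB : G (natl Z (iT X)) (iT (P Wv)) = Dact X lnf * G (iT Z) (iT (P Wv)) := by
      rw [hGauss Z X, Gaddl, GNT, add_zero, (hXZ X hX Z hZ).2, map_smul, Gsmull]
    have hFW : iN (F Wv) = J (iT Wv) - iT (P Wv) := by rw [hJT]; abel
    calc G (iN (hh X Z)) (iN (F Wv))
        = G (natl Z (iT X)) (iN (F Wv)) := by
          rw [hGauss Z X, Gaddl, Gorth, zero_add, hhsymm Z X]
      _ = G (natl Z (iT X)) (J (iT Wv)) - G (natl Z (iT X)) (iT (P Wv)) := by
          rw [hFW, sub_eq_add_neg, Gaddr, Gnegr]; ring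
      _ = -(G (J (natl Z (iT X))) (iT Wv)) - G (natl Z (iT X)) (iT (P Wv)) := by
          rw [GJswap]
      _ = -(G (natl Z (iT (P X)) - (G lee (iT (P X)) • iT Z - G lee (iT X) • J (iT Z)))
            (iT Wv)) - G (natl Z (iT X)) (iT (P Wv)) := by rw [hJn]
      _ = -(Dact (P X) lnf * G (iT Z) (iT Wv)
            - (G lee (iT (P X)) * G (iT Z) (iT Wv)
              - G lee (iT X) * (-(G (iT Z) (iT (P Wv))))))
          - Dact X lnf * G (iT Z) (iT (P Wv)) := by
          rw [Gsubl, Gsubl, Gsmull, Gsmull, NA, NB, GJT]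
      _ = (G lee (iT (P X)) - Dact (P X) lnf) * G (iT Z) (iT Wv)
          + (G lee (iT X) - Dact X lnf) * G (iT Z) (iT (P Wv)) := by ring
  intro X hX Z hZ Wv hW
  rw [keyE X hX (P Z) (hPDTh Z hZ) Wv hW, keyE X hX Z hZ (P Wv) (hPDTh Wv hW),
    Pskew Z Wv, Pskew Z (P Wv)]
  ring
end

section
/- There does not exist a mixed totally geodesic CR-warped product submanifold of the form N^T ×_f N^⊥ with non-constant warping function f in a Kaehler manifold. (Equivalently: if a CR-warped product N^T ×_f N^⊥ in a Kaehler manifold is mixed totally geodesic, then f is constant.) -/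
/-!
We model the geometry of a submanifold `M` of an almost Hermitian (locally
conformal Kaehler) manifold algebraically.  `M` is the set of points of the
submanifold, `R := M → ℝ` plays the role of the ring of functions on `M`,
`V` is the module of tangent vector fields of `M`, `N` the module of normal
vector fields, and `W` the module of ambient vector fields along `M`, with
inclusions `iT`, `iN`.  `G` is the ambient metric, `J` the almost complex
structure, `P`/`F` the tangential/normal parts of `J` on tangent fields,
`nab` the induced Levi-Civita connection on `M`, `hh` the second fundamental
form, `A` the shape operator, `nabp` the normal connection, and `natl` the
ambient Levi-Civita connection differentiated along tangent directions
(Gauss and Weingarten formulas).  The LCK structure equation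
`(∇̃_X J)Y = g(λ,JY)X - g(λ,Y)JX + g(JX,Y)λ + g(X,Y)Jλ` is imposed with Lee
vector field `lee = λ = α^#`; note `β^# = Jλ`, `α(X) = g(λ,X)`.
`M` is pointwise semi-slant: `TM = 𝔇 ⊕ 𝔇^θ` (`DD`, `DTh`) with `J𝔇 = 𝔇` and
`𝔇^θ` pointwise slant with slant function `θ` (`P² = -(cos²θ)Id` on `𝔇^θ`).
-/

/-- Corollary 4.3: a mixed totally geodesic CR-warped product `N^T ×_f N^⊥` in a Kaehler manifold has constant warping function: `X(ln f) = 0` for all `X ∈ 𝔇` (and `Z(ln f) = 0` for `Z ∈ 𝔇^⊥` already holds). -/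
theorem no_mixed_tg_CR_warped_Kaehler
    {M V N W : Type*}
    [AddCommGroup V] [Module (M → ℝ) V]
    [AddCommGroup N] [Module (M → ℝ) N]
    [AddCommGroup W] [Module (M → ℝ) W]
    (iT : V →ₗ[M → ℝ] W) (iN : N →ₗ[M → ℝ] W)
    (G : W → W → M → ℝ)
    (Gsymm : ∀ a b, G a b = G b a)
    (Gaddl : ∀ a b c, G (a + b) c = G a c + G b c)
    (Gsmull : ∀ (r : M → ℝ) (a b : W), G (r • a) b = r * G a b)
    (Gorth : ∀ (X : V) (ξ : N), G (iT X) (iN ξ) = 0)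
    (J : W →ₗ[M → ℝ] W)
    (hJ2 : ∀ a, J (J a) = -a)
    (hJG : ∀ a b, G (J a) (J b) = G a b)
    (P : V →ₗ[M → ℝ] V) (F : V →ₗ[M → ℝ] N)
    (hJT : ∀ X : V, J (iT X) = iT (P X) + iN (F X))
    (nab : V → V → V) (hh : V → V → N) (A : N → V → V) (nabp : V → N → N)
    (natl : V → W → W)
    (hGauss : ∀ X Y : V, natl X (iT Y) = iT (nab X Y) + iN (hh X Y))
    (hWein : ∀ (X : V) (ξ : N), natl X (iN ξ) = -(iT (A ξ X)) + iN (nabp X ξ))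
    (hhsymm : ∀ X Y, hh X Y = hh Y X)
    (hShape : ∀ (X Y : V) (ξ : N), G (iN (hh X Y)) (iN ξ) = G (iT (A ξ X)) (iT Y))
    (hKaehler : ∀ (X : V) (a : W), natl X (J a) = J (natl X a))
    (DD DTh : Submodule (M → ℝ) V)
    (hsplit : ∀ X : V, ∃ X₁ ∈ DD, ∃ X₂ ∈ DTh, X = X₁ + X₂)
    (horth : ∀ X ∈ DD, ∀ Z ∈ DTh, G (iT X) (iT Z) = 0)
    (hinv : ∀ X ∈ DD, P X ∈ DD ∧ F X = 0)
    (htotreal : ∀ Z ∈ DTh, P Z = 0)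
    (Dact : V → (M → ℝ) → M → ℝ)
    (lnf : M → ℝ)
    (hDadd : ∀ X r s, Dact X (r + s) = Dact X r + Dact X s)
    (hDmul : ∀ X r s, Dact X (r * s) = Dact X r * s + r * Dact X s)
    (hDcompat : ∀ (X : V) (a b : W), Dact X (G a b) = G (natl X a) b + G a (natl X b))
    (hNTgeo : ∀ X ∈ DD, ∀ Y ∈ DD, nab X Y ∈ DD)
    (hXZ : ∀ X ∈ DD, ∀ Z ∈ DTh, nab X Z = Dact X lnf • Z ∧ nab Z X = Dact X lnf • Z)
    (hZW : ∀ X ∈ DD, ∀ Z ∈ DTh, ∀ Wv ∈ DTh,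
      G (iT (nab Z Wv)) (iT X) = -(Dact X lnf) * G (iT Z) (iT Wv))
    (hfNT : ∀ Z ∈ DTh, Dact Z lnf = 0)
    (hDThnontriv : ∃ Z ∈ DTh, ∀ x, G (iT Z) (iT Z) x ≠ 0)
    (hmixedtg : ∀ X ∈ DD, ∀ Z ∈ DTh, hh X Z = 0) :
    ∀ X ∈ DD, Dact X lnf = 0 := by
  obtain ⟨Z, hZ, hZnz⟩ := hDThnontriv
  intro X hX
  obtain ⟨hPX, hFX⟩ := hinv X hX
  have hPZ := htotreal Z hZ
  have hJZ : J (iT Z) = iN (F Z) := by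
    rw [hJT, hPZ, map_zero, zero_add]
  -- key equation
  have key : iT (nab Z (P X)) = Dact X lnf • iN (F Z) := by
    have h1 : natl Z (J (iT X)) = J (natl Z (iT X)) := hKaehler Z (iT X)
    rw [hJT, hFX, map_zero, add_zero, hGauss, hhsymm, hmixedtg (P X) hPX Z hZ,
      map_zero, add_zero, hGauss, hhsymm, hmixedtg X hX Z hZ, map_zero, add_zero,
      (hXZ X hX Z hZ).2, map_smul, map_smul, hJZ] at h1
    exact h1
  have hmul : Dact X lnf * G (iT Z) (iT Z) = 0 := by
    have h0 : G (iT (nab Z (P X))) (iN (F Z)) = 0 := Gorth _ _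
    rw [key, Gsmull] at h0
    have hGF : G (iN (F Z)) (iN (F Z)) = G (iT Z) (iT Z) := by
      rw [← hJZ, hJG]
    rw [hGF] at h0
    exact h0
  funext x
  have := congrFun hmul x
  simp only [Pi.mul_apply, Pi.zero_apply] at this
  rcases mul_eq_zero.mp this with h | h
  · exact h
  · exact absurd h (hZnz x)
end
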